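/- arXiv:1609.05267 — 2 statements merged into one kernel-verified Lean document; each statement's English description precedes it below -/
import Mathlib

section
/- Let A ∈ ℝ^{n×n}, let k be an odd natural number, and define G : ℝⁿ → ℝⁿ by G(x) = (Ax)^{[k]} (componentwise k-th power of Ax). Then the set {q ∈ ℝⁿ : SOL(G, q) ≠ ∅} is closed in ℝⁿ. -/
open Finset

/-- The solution set of the (nonlinear/polynomial) complementarity problem for the map `g`
and vector `q`: all `x ≥ 0` with `g x + q ≥ 0` and `⟨x, g x + q⟩ = 0`. -/
def SOL {n : ℕ} (g : (Fin n → ℝ) → (Fin n → ℝ)) (q : Fin n → ℝ) : Set (Fin n → ℝ) :=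
  {x | (∀ i, 0 ≤ x i) ∧ (∀ i, 0 ≤ g x i + q i) ∧ ∑ i, x i * (g x i + q i) = 0}

/-- `F` is a polynomial map each of whose components is homogeneous of degree `d`. -/
def IsHomogPolyMap {n : ℕ} (F : (Fin n → ℝ) → (Fin n → ℝ)) (d : ℕ) : Prop :=
  ∃ P : Fin n → MvPolynomial (Fin n) ℝ,
    (∀ x i, F x i = MvPolynomial.eval x (P i)) ∧ ∀ i, (P i).IsHomogeneous d

/-- `p` is a polynomial map each of whose components has total degree `< d`. -/
def IsPolyMapDegLT {n : ℕ} (p : (Fin n → ℝ) → (Fin n → ℝ)) (d : ℕ) : Prop :=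
  ∃ P : Fin n → MvPolynomial (Fin n) ℝ,
    (∀ x i, p x i = MvPolynomial.eval x (P i)) ∧ ∀ i, (P i).totalDegree < d

/-!
An odd power `a ↦ a ^ k` is an order automorphism `e` of `ℝ`, and `e a + b` has the same sign as
`a - e⁻¹ (-b)`. Hence `SOL(G, q) = SOL(A, φ q)` with `φ q = -e⁻¹ (-q)` continuous, and it suffices
that the range of the LCP is closed. That range is the union, over `α ⊆ {1, …, n}`, of the
complementary cones spanned by the columns `-A eⱼ` (`j ∈ α`) and `eⱼ` (`j ∉ α`). By Carathéodory's
theorem for cones, a finitely generated cone is the finite union of the cones spanned by its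
linearly independent subfamilies, and each of those is the image of a closed orthant under an
injective linear map, hence closed.
-/

open Matrix

section ConicCaratheodory

variable {𝕜 E ι : Type*} [Field 𝕜] [LinearOrder 𝕜] [IsStrictOrderedRing 𝕜]
  [AddCommGroup E] [Module 𝕜 E] (v : ι → E)

/-- Move from `y` along the linear dependence `-f` until the first coordinate vanishes. -/
lemma exists_nonneg_eq_zero_sum_smul_eq {t : Finset ι} {y f : ι → 𝕜}
    (hy : ∀ i ∈ t, 0 ≤ y i) (hf : ∑ i ∈ t, f i • v i = 0) (hpos : ∃ i ∈ t, 0 < f i) :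
    ∃ j ∈ t, ∃ y' : ι → 𝕜, (∀ i ∈ t, 0 ≤ y' i) ∧ y' j = 0 ∧
      ∑ i ∈ t, y' i • v i = ∑ i ∈ t, y i • v i := by
  obtain ⟨i₀, hi₀t, hi₀⟩ := hpos
  obtain ⟨j, hj, hmin⟩ := (t.filter (0 < f ·)).exists_min_image (fun i => y i / f i)
    ⟨i₀, Finset.mem_filter.mpr ⟨hi₀t, hi₀⟩⟩
  obtain ⟨hjt, hfj⟩ := Finset.mem_filter.mp hj
  refine ⟨j, hjt, fun i => y i - y j / f j * f i, fun i hi => ?_, by field_simp; ring, ?_⟩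
  · rcases le_or_gt (f i) 0 with hfi | hfi
    · nlinarith [hy i hi, div_nonneg (hy j hjt) hfj.le]
    · have := (le_div_iff₀ hfi).mp (hmin i (Finset.mem_filter.mpr ⟨hi, hfi⟩))
      linarith
  · simp only [sub_smul, mul_smul, Finset.sum_sub_distrib, ← Finset.smul_sum, hf, smul_zero,
      sub_zero]

/-- Carathéodory's theorem for cones. -/
theorem exists_linearIndepOn_nonneg_sum_smul_eq (t : Finset ι) (y : ι → 𝕜)
    (hy : ∀ i ∈ t, 0 ≤ y i) :
    ∃ s ⊆ t, LinearIndepOn 𝕜 v (s : Set ι) ∧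
      ∃ z : ι → 𝕜, (∀ i ∈ s, 0 ≤ z i) ∧ ∑ i ∈ s, z i • v i = ∑ i ∈ t, y i • v i := by
  classical
  induction t using Finset.strongInduction generalizing y with
  | H t ih =>
  by_cases hli : LinearIndepOn 𝕜 v (t : Set ι)
  · exact ⟨t, subset_rfl, hli, y, hy, rfl⟩
  obtain ⟨f, hf, i, hit, hfi⟩ := not_linearIndepOn_finset_iff.mp hli
  obtain ⟨j, hjt, y', hy', hy'j, hsum⟩ : ∃ j ∈ t, ∃ y' : ι → 𝕜, (∀ i ∈ t, 0 ≤ y' i) ∧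
      y' j = 0 ∧ ∑ i ∈ t, y' i • v i = ∑ i ∈ t, y i • v i := by
    rcases hfi.lt_or_gt with hneg | hpos
    · exact exists_nonneg_eq_zero_sum_smul_eq v hy (f := -f)
        (by simp [neg_smul, Finset.sum_neg_distrib, hf]) ⟨i, hit, neg_pos.mpr hneg⟩
    · exact exists_nonneg_eq_zero_sum_smul_eq v hy hf ⟨i, hit, hpos⟩
  obtain ⟨s, hst, hs, z, hz, hzsum⟩ :=
    ih (t.erase j) (Finset.erase_ssubset hjt) y' fun i hi =>
      hy' i (Finset.mem_of_mem_erase hi)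
  refine ⟨s, hst.trans (Finset.erase_subset j t), hs, z, hz, ?_⟩
  rw [hzsum, Finset.sum_erase t (by simp [hy'j]), hsum]

end ConicCaratheodory

theorem LinearMap.isClosed_image_Ici_zero {ι E : Type*} [Fintype ι] [AddCommGroup E]
    [Module ℝ E] [TopologicalSpace E] [IsTopologicalAddGroup E] [ContinuousSMul ℝ E]
    [T2Space E] (L : (ι → ℝ) →ₗ[ℝ] E) : IsClosed (L '' Set.Ici 0) := by
  classical
  set v : ι → E := fun i => L fun j => if i = j then 1 else 0
  have hcover : L '' Set.Ici 0 = ⋃ (s : Finset ι) (_ : LinearIndepOn ℝ v (s : Set ι)),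
      Fintype.linearCombination ℝ (fun i : s => v i) '' Set.Ici 0 := by
    ext x
    simp only [Set.mem_iUnion, Set.mem_image, Set.mem_Ici, Fintype.linearCombination_apply]
    constructor
    · rintro ⟨y, hy, rfl⟩
      obtain ⟨s, -, hs, z, hz, hsum⟩ :=
        exists_linearIndepOn_nonneg_sum_smul_eq v Finset.univ y fun i _ => hy i
      refine ⟨s, hs, fun i => z i, fun i => hz i i.2, ?_⟩
      rw [Finset.sum_coe_sort s fun i => z i • v i, hsum, L.pi_apply_eq_sum_univ]
    · rintro ⟨s, -, z, hz, rfl⟩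
      refine ⟨fun i => if h : i ∈ s then z ⟨i, h⟩ else 0, fun i => ?_, ?_⟩
      · dsimp only [Pi.zero_apply]
        split_ifs
        exacts [hz _, le_rfl]
      · rw [L.pi_apply_eq_sum_univ, ← Finset.sum_subset (Finset.subset_univ s) fun i _ hi => by
          simp [hi], ← Finset.sum_coe_sort s]
        simp [v]
  rw [hcover]
  refine isClosed_iUnion_of_finite fun s => isClosed_iUnion_of_finite fun hs => ?_
  exact (LinearMap.isClosedEmbedding_of_injective (LinearMap.ker_eq_bot.mpr
    hs.fintypeLinearCombination_injective)).isClosedMap _ isClosed_Ici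

/-- The matrix whose `j`-th column is `-A eⱼ` for `j ∈ α` and `eⱼ` otherwise: it maps the
nonnegative orthant onto the complementary cone of `α`. -/
def complementaryMatrix {m R : Type*} [Fintype m] [DecidableEq m] [CommRing R]
    (A : Matrix m m R) (α : Finset m) : Matrix m m R :=
  diagonal (fun i => if i ∈ α then (0 : R) else 1) -
    A * diagonal fun i => if i ∈ α then (1 : R) else 0

lemma complementaryMatrix_mulVec {m R : Type*} [Fintype m] [DecidableEq m] [CommRing R]
    (A : Matrix m m R) (α : Finset m) (y : m → R) :
    complementaryMatrix A α *ᵥ y =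
      (fun i => if i ∈ α then 0 else y i) - A *ᵥ fun i => if i ∈ α then y i else 0 := by
  have hdiag : (diagonal fun i => if i ∈ α then (1 : R) else 0) *ᵥ y =
      fun i => if i ∈ α then y i else 0 := by
    ext i
    simp [mulVec_diagonal]
  ext i
  simp [complementaryMatrix, sub_mulVec, ← mulVec_mulVec, hdiag, mulVec_diagonal]

lemma mem_SOL_iff {n : ℕ} {g : (Fin n → ℝ) → Fin n → ℝ} {q x : Fin n → ℝ} :
    x ∈ SOL g q ↔ ∀ i, 0 ≤ x i ∧ 0 ≤ g x i + q i ∧ x i * (g x i + q i) = 0 := by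
  simp only [SOL, Set.mem_ofPred_eq]
  constructor
  · rintro ⟨hx, hw, hsum⟩ i
    exact ⟨hx i, hw i, (Finset.sum_eq_zero_iff_of_nonneg fun i _ => mul_nonneg (hx i) (hw i)).mp
      hsum i (Finset.mem_univ i)⟩
  · intro h
    exact ⟨fun i => (h i).1, fun i => (h i).2.1, Finset.sum_eq_zero fun i _ => (h i).2.2⟩

lemma SOL_mulVec_nonempty_iff {n : ℕ} (A : Matrix (Fin n) (Fin n) ℝ) (q : Fin n → ℝ) :
    (SOL (fun x => A *ᵥ x) q).Nonempty ↔
      ∃ α, q ∈ (complementaryMatrix A α).mulVecLin '' Set.Ici 0 := by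
  simp only [Set.mem_image, Set.mem_Ici, Matrix.mulVecLin_apply, complementaryMatrix_mulVec]
  constructor
  · rintro ⟨x, hx⟩
    rw [mem_SOL_iff] at hx
    refine ⟨Finset.univ.filter (x · ≠ 0), x + (A *ᵥ x + q),
      fun i => add_nonneg (hx i).1 (hx i).2.1, ?_⟩
    have hcompl : ∀ i, x i ≠ 0 → (A *ᵥ x) i + q i = 0 := fun i hi =>
      (mul_eq_zero.mp (hx i).2.2).resolve_left hi
    have hx_part : (fun i => if i ∈ Finset.univ.filter (x · ≠ 0) then (x + (A *ᵥ x + q)) i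
        else 0) = x := by
      ext i
      by_cases hi : x i = 0 <;> simp [hi, hcompl]
    ext i
    rw [Pi.sub_apply, hx_part]
    by_cases hi : x i = 0
    · simp [hi]
    · simp [hi, eq_neg_of_add_eq_zero_right (hcompl i hi)]
  · rintro ⟨α, y, hy, rfl⟩
    refine ⟨fun i => if i ∈ α then y i else 0, mem_SOL_iff.mpr fun i => ?_⟩
    have hyi : 0 ≤ y i := hy i
    by_cases hi : i ∈ α <;> simp [hi, hyi]

theorem isClosed_setOf_SOL_mulVec_nonempty {n : ℕ} (A : Matrix (Fin n) (Fin n) ℝ) :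
    IsClosed {q : Fin n → ℝ | (SOL (fun x => A *ᵥ x) q).Nonempty} := by
  simp only [SOL_mulVec_nonempty_iff, Set.ofPred_exists, Set.ofPred_mem_eq]
  exact isClosed_iUnion_of_finite fun α =>
    (complementaryMatrix A α).mulVecLin.isClosed_image_Ici_zero

lemma SOL_eq_of_iff {n : ℕ} {g g' : (Fin n → ℝ) → Fin n → ℝ} {q q' : Fin n → ℝ}
    (hle : ∀ x i, 0 ≤ g x i + q i ↔ 0 ≤ g' x i + q' i)
    (heq : ∀ x i, g x i + q i = 0 ↔ g' x i + q' i = 0) :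
    SOL g q = SOL g' q' := by
  ext x
  simp only [mem_SOL_iff, mul_eq_zero, hle, heq]

/-- `e a + b` and `a - e.symm (-b)` have the same sign. -/
lemma SOL_orderIso_comp {n : ℕ} (e : ℝ ≃o ℝ) (g : (Fin n → ℝ) → Fin n → ℝ) (q : Fin n → ℝ) :
    SOL (fun x i => e (g x i)) q = SOL g fun i => -e.symm (-q i) := by
  refine SOL_eq_of_iff (fun x i => ?_) fun x i => ?_
  · rw [← neg_le_iff_add_nonneg, ← e.symm_apply_le, ← sub_eq_add_neg, sub_nonneg]
  · rw [add_eq_zero_iff_eq_neg, ← e.eq_symm_apply, ← sub_eq_add_neg, sub_eq_zero]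

theorem isClosed_setOf_SOL_orderIso_comp_nonempty {n : ℕ} (e : ℝ ≃o ℝ)
    {g : (Fin n → ℝ) → Fin n → ℝ} (hg : IsClosed {q : Fin n → ℝ | (SOL g q).Nonempty}) :
    IsClosed {q : Fin n → ℝ | (SOL (fun x i => e (g x i)) q).Nonempty} := by
  simp only [SOL_orderIso_comp]
  exact hg.preimage <| continuous_pi fun i =>
    (e.symm.continuous.comp (continuous_apply i).neg).neg

lemma Odd.surjective_pow_real {k : ℕ} (hk : Odd k) :
    Function.Surjective fun a : ℝ => a ^ k := by
  have hk₀ : k ≠ 0 := by rintro rfl; simp at hk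
  intro b
  rcases le_total 0 b with hb | hb
  · exact ⟨b ^ (k⁻¹ : ℝ), Real.rpow_inv_natCast_pow hb hk₀⟩
  · refine ⟨-(-b) ^ (k⁻¹ : ℝ), ?_⟩
    simp only [hk.neg_pow, Real.rpow_inv_natCast_pow (neg_nonneg.mpr hb) hk₀, neg_neg]

theorem stmt_6 {n k : ℕ} (hk : Odd k) (A : Matrix (Fin n) (Fin n) ℝ) :
    IsClosed {q : Fin n → ℝ | (SOL (fun x i => A.mulVec x i ^ k) q).Nonempty} :=
  isClosed_setOf_SOL_orderIso_comp_nonempty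
    (hk.strictMono_pow.orderIsoOfSurjective _ hk.surjective_pow_real)
    (isClosed_setOf_SOL_mulVec_nonempty A)
end

section
/- Let A ∈ ℝ^{n×n}, let k be an odd natural number, and define G : ℝⁿ → ℝⁿ by G(x) = (Ax)^{[k]}. If A is an R₀-matrix (i.e., SOL(A,0) = {0}), then SOL(G,0) = {0}. If A is an R-matrix (i.e., additionally SOL(A,d) = {0} for some d ∈ ℝⁿ with d > 0), then SOL(G,0) = {0} and SOL(G,d') = {0} for some d' ∈ ℝⁿ with d' > 0. -/
open Finset

/-
Since `t ↦ t ^ k` is an odd, strictly increasing bijection of `ℝ` for odd `k`, the conditions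
`a ^ k + b ^ k ≥ 0` and `a ^ k + b ^ k = 0` are equivalent to `a + b ≥ 0` and `a + b = 0`.
Because a complementarity problem can be checked coordinatewise, this gives
`SOL(g ^ [k], q ^ [k]) = SOL(g, q)` for every map `g` and every `q`; taking `q = 0` and `q = d`
transfers both the `R₀` and the `R` property from `x ↦ A x` to `x ↦ (A x) ^ [k]`.
-/

theorem mem_SOL_iff_forall {n : ℕ} {g : (Fin n → ℝ) → (Fin n → ℝ)} {q x : Fin n → ℝ} :
    x ∈ SOL g q ↔ ∀ i, 0 ≤ x i ∧ 0 ≤ g x i + q i ∧ x i * (g x i + q i) = 0 := by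
  constructor
  · rintro ⟨hx, hgq, hsum⟩ i
    have hterms := (sum_eq_zero_iff_of_nonneg fun j _ => mul_nonneg (hx j) (hgq j)).mp hsum
    exact ⟨hx i, hgq i, hterms i (mem_univ i)⟩
  · intro h
    exact ⟨fun i => (h i).1, fun i => (h i).2.1, sum_eq_zero fun i _ => (h i).2.2⟩

theorem Odd.pow_add_pow_nonneg_iff {k : ℕ} (hk : Odd k) (a b : ℝ) :
    0 ≤ a ^ k + b ^ k ↔ 0 ≤ a + b := by
  rw [← neg_le_iff_add_nonneg', ← neg_le_iff_add_nonneg', ← hk.neg_pow, hk.pow_le_pow]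

theorem Odd.pow_add_pow_eq_zero_iff {k : ℕ} (hk : Odd k) (a b : ℝ) :
    a ^ k + b ^ k = 0 ↔ a + b = 0 := by
  rw [add_eq_zero_iff_eq_neg, add_eq_zero_iff_eq_neg, ← hk.neg_pow, hk.pow_inj]

theorem SOL_pow_of_odd {n k : ℕ} (hk : Odd k) (g : (Fin n → ℝ) → (Fin n → ℝ))
    (q : Fin n → ℝ) :
    SOL (fun x i => g x i ^ k) (fun i => q i ^ k) = SOL g q := by
  ext x
  simp only [mem_SOL_iff_forall, hk.pow_add_pow_nonneg_iff, mul_eq_zero,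
    hk.pow_add_pow_eq_zero_iff]

theorem stmt_7 {n k : ℕ} (hk : Odd k) (A : Matrix (Fin n) (Fin n) ℝ) :
    (SOL (fun x => A.mulVec x) 0 = {0} → SOL (fun x i => A.mulVec x i ^ k) 0 = {0}) ∧
    ((SOL (fun x => A.mulVec x) 0 = {0} ∧
        ∃ d : Fin n → ℝ, (∀ i, 0 < d i) ∧ SOL (fun x => A.mulVec x) d = {0}) →
      SOL (fun x i => A.mulVec x i ^ k) 0 = {0} ∧
        ∃ d' : Fin n → ℝ, (∀ i, 0 < d' i) ∧ SOL (fun x i => A.mulVec x i ^ k) d' = {0}) := by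
  have hzero : (fun i => (0 : Fin n → ℝ) i ^ k) = 0 := funext fun _ => zero_pow hk.pos.ne'
  have hR₀ : SOL (fun x i => A.mulVec x i ^ k) 0 = SOL (fun x => A.mulVec x) 0 := by
    simpa only [hzero] using SOL_pow_of_odd hk (fun x => A.mulVec x) 0
  refine ⟨hR₀.trans, fun ⟨h₀, d, hd, hdSOL⟩ => ⟨hR₀.trans h₀, fun i => d i ^ k,
    fun i => pow_pos (hd i) k, ?_⟩⟩
  rw [SOL_pow_of_odd hk, hdSOL]
end
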